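/- For all complex polynomials f and g, ⟨f' + 3·i·t·z²·f, g⟩ = −a·⟨f, z·g⟩, where f' denotes the derivative of f and z·g denotes the polynomial g multiplied by the variable. -/

import Mathlib

/-!
Integration by parts for the Wirtinger derivative `∂ = ∂/∂z`. Write the density as `exp φ` and
`G(z) = f(z) · conj(g(-z)) · exp φ(z)`. Since `conj(g(-z))` is antiholomorphic and
`∂φ = -a z̄ + 3 i t z²`, we get `∂G = (f' + 3 i t z² f − a z̄ f) · conj(g(-z)) · exp φ`, and
`−z̄ · conj(g(-z)) = conj((z g)(-z))`. The Gaussian factor `exp(-a|z|²)` makes `G` and its real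
directional derivatives integrable, so `∫ ∂G = 0`, which is the claim.
-/

open MeasureTheory Polynomial Complex

/-- The density `exp(-a|z|² + i t (z³ + conj(z)³))`. -/
noncomputable def cubicDensity (a t : ℝ) (z : ℂ) : ℂ :=
  Complex.exp (-(a : ℂ) * ((‖z‖ : ℝ) : ℂ) ^ 2 +
    Complex.I * (t : ℂ) * (z ^ 3 + (starRingEnd ℂ) z ^ 3))

/-- The pairing `⟨f,g⟩ = ∫_ℂ f(z) conj(g(-z)) exp(-a|z|² + i t (z³ + conj(z)³)) dx dy`. -/
noncomputable def cubicPairing (a t : ℝ) (f g : Polynomial ℂ) : ℂ :=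
  ∫ z : ℂ, f.eval z * (starRingEnd ℂ) (g.eval (-z)) * cubicDensity a t z

open ComplexConjugate

section GaussianMoments

variable {E : Type*} [NormedAddCommGroup E] [NormedSpace ℝ E] [Nontrivial E]
  [FiniteDimensional ℝ E] [MeasurableSpace E] [BorelSpace E] (μ : Measure E) [μ.IsAddHaarMeasure]

theorem integrable_norm_pow_mul_exp_neg_mul_sq_norm {b : ℝ} (hb : 0 < b) (n : ℕ) :
    Integrable (fun x : E => ‖x‖ ^ n * Real.exp (-b * ‖x‖ ^ 2)) μ := by
  rw [integrable_fun_norm_addHaar μ (f := fun y => y ^ n * Real.exp (-b * y ^ 2))]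
  have hs : (-1 : ℝ) < ((Module.finrank ℝ E - 1 + n : ℕ) : ℝ) := by
    linarith [(Nat.cast_nonneg _ : (0 : ℝ) ≤ ((Module.finrank ℝ E - 1 + n : ℕ) : ℝ))]
  refine (integrableOn_rpow_mul_exp_neg_mul_sq hb hs).congr_fun (fun y _ => ?_) measurableSet_Ioi
  simp only [Real.rpow_natCast, smul_eq_mul, pow_add, mul_assoc]

end GaussianMoments

theorem Polynomial.norm_eval_le_sum_norm_coeff_mul {R : Type*} [NormedDivisionRing R]
    (p : R[X]) (z : R) :
    ‖p.eval z‖ ≤ ∑ i ∈ Finset.range (p.natDegree + 1), ‖p.coeff i‖ * ‖z‖ ^ i := by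
  rw [eval_eq_sum_range]
  refine (norm_sum_le _ _).trans_eq ?_
  simp only [norm_mul, norm_pow]

theorem integrable_norm_eval_mul_exp_neg_mul_sq_norm (p : ℂ[X]) {b : ℝ} (hb : 0 < b) :
    Integrable fun z : ℂ => ‖p.eval z‖ * Real.exp (-b * ‖z‖ ^ 2) := by
  refine Integrable.mono' (integrable_finsetSum (Finset.range (p.natDegree + 1)) fun i _ =>
    (integrable_norm_pow_mul_exp_neg_mul_sq_norm volume hb i).const_mul ‖p.coeff i‖)
    (by fun_prop) (.of_forall fun z => ?_)
  rw [norm_mul, norm_norm, Real.norm_of_nonneg (Real.exp_pos _).le, Finset.sum_congr rfl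
    fun i _ => (mul_assoc _ _ _).symm, ← Finset.sum_mul]
  gcongr
  exact p.norm_eval_le_sum_norm_coeff_mul z

section IntegrationByParts

variable {E F : Type*} [NormedAddCommGroup E] [NormedSpace ℝ E] [FiniteDimensional ℝ E]
  [MeasurableSpace E] [BorelSpace E] {μ : Measure E} [μ.IsAddHaarMeasure]
  [NormedAddCommGroup F] [NormedSpace ℝ F]

theorem integral_eq_zero_of_hasLineDerivAt {H H' : E → F} {v : E}
    (hH : ∀ x, HasLineDerivAt ℝ H (H' x) x v) (hHi : Integrable H μ) (hH'i : Integrable H' μ) :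
    ∫ x, H' x ∂μ = 0 := by
  have := integral_bilinear_hasLineDerivAt_right_eq_neg_left_of_integrable (μ := μ)
    (B := ContinuousLinearMap.lsmul ℝ ℝ) (f := fun _ => (1 : ℝ)) (f' := fun _ => 0) (g := H)
    (g' := H') (by simp) (by simpa using hH'i) (by simpa using hHi)
    (fun x _ => by simpa using (hasFDerivAt_const (1 : ℝ) x).hasLineDerivAt v) (fun x _ => hH x)
  simpa using this

end IntegrationByParts

/-- The hypothesis says that `α = ∂H/∂z` and `β = ∂H/∂z̄` are the Wirtinger derivatives of `H`. -/
theorem integral_eq_zero_of_hasLineDerivAt_eq_mul_add_mul_conj {H α β : ℂ → ℂ}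
    (hH : ∀ z v, HasLineDerivAt ℝ H (α z * v + β z * conj v) z v)
    (hHi : Integrable H) (hα : Integrable α) (hβ : Integrable β) : ∫ z, α z = 0 := by
  have h1 : ∫ z, (α z + β z) = 0 :=
    integral_eq_zero_of_hasLineDerivAt (fun z => by simpa using hH z 1) hHi (hα.add hβ)
  have hI : ∫ z, (α z - β z) * I = 0 :=
    integral_eq_zero_of_hasLineDerivAt (fun z => by
      rw [show (α z - β z) * I = α z * I + β z * conj I by rw [conj_I]; ring]; exact hH z I) hHi
      ((hα.sub hβ).mul_const I)
  rw [integral_add hα hβ] at h1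
  rw [integral_mul_const, integral_sub hα hβ, mul_eq_zero, or_iff_left I_ne_zero] at hI
  linear_combination (h1 + hI) / 2

theorem cubicDensity_eq_exp (a t : ℝ) (z : ℂ) :
    cubicDensity a t z = cexp (-a * (z * conj z) + I * t * (z ^ 3 + conj z ^ 3)) := by
  rw [cubicDensity, mul_conj, normSq_eq_norm_sq, ofReal_pow]

theorem norm_cubicDensity (a t : ℝ) (z : ℂ) : ‖cubicDensity a t z‖ = Real.exp (-a * ‖z‖ ^ 2) := by
  rw [cubicDensity, norm_exp, ← map_pow, add_conj]
  simp [← ofReal_pow]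

theorem hasLineDerivAt_cubicDensity (a t : ℝ) (z v : ℂ) :
    HasLineDerivAt ℝ (cubicDensity a t)
      (((-a * conj z + 3 * I * t * z ^ 2) * v + (-a * z + 3 * I * t * conj z ^ 2) * conj v) *
        cubicDensity a t z) z v := by
  have hw : HasDerivAt (fun s : ℝ => z + s • v) v 0 := (hasFDerivAt_id z).hasLineDerivAt v
  have hw' : HasDerivAt (fun s : ℝ => conj (z + s • v)) (conj v) 0 := hw.star
  have hφ := ((hw.fun_mul hw').const_mul (-a : ℂ)).fun_add
    (((hw.fun_pow 3).fun_add (hw'.fun_pow 3)).const_mul (I * t))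
  rw [show cubicDensity a t = _ from funext (cubicDensity_eq_exp a t)]
  refine hφ.cexp.congr_deriv ?_
  simp only [zero_smul, add_zero, Nat.cast_ofNat]
  ring

noncomputable def cubicPairingIntegrand (a t : ℝ) (f g : ℂ[X]) (z : ℂ) : ℂ :=
  f.eval z * conj (g.eval (-z)) * cubicDensity a t z

theorem cubicPairing_eq_integral (a t : ℝ) (f g : ℂ[X]) :
    cubicPairing a t f g = ∫ z, cubicPairingIntegrand a t f g z :=
  rfl

theorem integrable_cubicPairingIntegrand {a : ℝ} (ha : 0 < a) (t : ℝ) (f g : ℂ[X]) :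
    Integrable (cubicPairingIntegrand a t f g) := by
  refine (integrable_norm_eval_mul_exp_neg_mul_sq_norm (f * g.comp (-X)) ha).mono'
    (by unfold cubicPairingIntegrand cubicDensity; fun_prop) (.of_forall fun z => ?_)
  simp [cubicPairingIntegrand, norm_cubicDensity]

theorem hasLineDerivAt_cubicPairingIntegrand (a t : ℝ) (f g : ℂ[X]) (z v : ℂ) :
    HasLineDerivAt ℝ (cubicPairingIntegrand a t f g)
      ((cubicPairingIntegrand a t (derivative f + C (3 * I * t) * X ^ 2 * f) g z +
          a * cubicPairingIntegrand a t f (X * g) z) * v +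
        (cubicPairingIntegrand a t f (C (-3 * I * t) * X ^ 2 * g - derivative g) z -
          a * cubicPairingIntegrand a t (X * f) g z) * conj v) z v := by
  have hw : HasDerivAt (fun s : ℝ => z + s • v) v 0 := (hasFDerivAt_id z).hasLineDerivAt v
  have hf : HasDerivAt (fun s : ℝ => f.eval (z + s • v)) ((derivative f).eval z * v) 0 :=
    (f.hasDerivAt z).comp_of_eq 0 hw (by simp)
  have hg : HasDerivAt (fun s : ℝ => conj (g.eval (-(z + s • v))))
      (conj ((derivative g).eval (-z) * -v)) 0 :=
    ((g.hasDerivAt (-z)).comp_of_eq 0 hw.neg (by simp)).star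
  refine ((hf.fun_mul hg).fun_mul (hasLineDerivAt_cubicDensity a t z v)).congr_deriv ?_
  simp only [cubicPairingIntegrand, eval_add, eval_sub, eval_mul, eval_C, eval_X, eval_pow,
    eval_neg, map_sub, map_mul, map_neg, map_pow, conj_ofReal, conj_I, map_ofNat,
    eval_ofNat, zero_smul, add_zero]
  ring

theorem stmt_2 (a t : ℝ) (ha : 0 < a) (f g : Polynomial ℂ) :
    cubicPairing a t (derivative f + C (3 * Complex.I * (t : ℂ)) * X ^ 2 * f) g =
      -(a : ℂ) * cubicPairing a t f (X * g) := by
  have hint := integrable_cubicPairingIntegrand ha t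
  have key := integral_eq_zero_of_hasLineDerivAt_eq_mul_add_mul_conj
    (hasLineDerivAt_cubicPairingIntegrand a t f g) (hint f g)
    ((hint _ _).add ((hint f (X * g)).const_mul _)) ((hint _ _).sub ((hint (X * f) g).const_mul _))
  rw [integral_add (hint _ _) ((hint _ _).const_mul _), integral_const_mul] at key
  rw [cubicPairing_eq_integral, cubicPairing_eq_integral]
  linear_combination key
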